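/- Let 1 ≤ d ≤ n−1 and let Λ be a primitive d-lattice in ℤⁿ. Then covol(Λ^⊥) = covol(Λ). -/

import Mathlib

open Matrix

noncomputable section

/-- The set of all integer linear combinations of the columns of `B`
(the `ℤ`-span of the columns of `B`). -/
def zspan {n d : ℕ} (B : Matrix (Fin n) (Fin d) ℝ) : Set (Fin n → ℝ) :=
  Set.range fun c : Fin d → ℤ => B.mulVec fun j => (c j : ℝ)

/-- `B` is a `ℤ`-basis matrix for `Λ`: its columns are `ℝ`-linearly independent
and their `ℤ`-span is `Λ`. -/
def IsLatticeBasis {n d : ℕ} (B : Matrix (Fin n) (Fin d) ℝ) (Λ : Set (Fin n → ℝ)) : Prop :=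
  LinearIndependent ℝ (fun j : Fin d => fun i : Fin n => B i j) ∧ Λ = zspan B

/-- `Λ` is a `d`-lattice in `ℝⁿ`: it is generated over `ℤ` by `d`
linearly independent vectors. -/
def IsDLattice {n : ℕ} (d : ℕ) (Λ : Set (Fin n → ℝ)) : Prop :=
  ∃ B : Matrix (Fin n) (Fin d) ℝ, IsLatticeBasis B Λ

/-- `ℤⁿ` viewed as a subset of `ℝⁿ`. -/
def intLattice (n : ℕ) : Set (Fin n → ℝ) :=
  Set.range fun c : Fin n → ℤ => fun i => (c i : ℝ)

/-- `Λ` is primitive inside `Δ` : `Λ = Δ ∩ span_ℝ Λ`. -/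
def IsPrimitiveIn {n : ℕ} (Λ Δ : Set (Fin n → ℝ)) : Prop :=
  Λ = Δ ∩ (Submodule.span ℝ Λ : Set (Fin n → ℝ))

/-- The dual lattice `Λ* = {y ∈ V_Λ : ⟨x,y⟩ ∈ ℤ for all x ∈ Λ}`. -/
def dualLattice {n : ℕ} (Λ : Set (Fin n → ℝ)) : Set (Fin n → ℝ) :=
  {y | y ∈ Submodule.span ℝ Λ ∧ ∀ x ∈ Λ, ∃ m : ℤ, x ⬝ᵥ y = (m : ℝ)}

/-- Orthogonal complement with respect to the standard inner product on `ℝⁿ`. -/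
def perp {n : ℕ} (V : Submodule ℝ (Fin n → ℝ)) : Submodule ℝ (Fin n → ℝ) where
  carrier := {y | ∀ x ∈ V, x ⬝ᵥ y = 0}
  add_mem' := by
    intro a b ha hb x hx
    simp [dotProduct_add, ha x hx, hb x hx]
  zero_mem' := by
    intro x hx
    simp
  smul_mem' := by
    intro c a ha x hx
    simp [dotProduct_smul, ha x hx]

/-!
Write `Λ = B₀ ℤᵈ` with `B₀` an integer matrix. Primitivity of `Λ` makes `ℤⁿ ⧸ B₀ ℤᵈ`
torsion-free, hence free, so `B₀` extends to a unimodular matrix `U = [B₀ | D]`. Splitting the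
rows of `U⁻¹` as `[Y; Z]`, the integer vectors orthogonal to `Λ` are exactly `Zᵀ ℤⁿ⁻ᵈ`, and the
Gram determinant of a lattice does not depend on the basis, so `covol(Λ^⊥)² = det (Z Zᵀ)`.
With `M = [B₀ | Zᵀ]` the products `Uᵀ M` and `U⁻¹ M` are block triangular, giving
`det U * det M = det (B₀ᵀ B₀)` and `det M = det U * det (Z Zᵀ)`; as `det U = ±1`, the two Gram
determinants agree.
-/

theorem Module.Basis.exists_extend_of_isTorsionFree_quotient {R M ι κ : Type*} [CommRing R]
    [IsDomain R] [IsPrincipalIdealRing R] [AddCommGroup M] [Module R M] [Module.Free R M]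
    [Module.Finite R M] [Fintype ι] [DecidableEq ι] [Fintype κ]
    {f : (ι → R) →ₗ[R] M} (hf : Function.Injective f)
    [Module.IsTorsionFree R (M ⧸ LinearMap.range f)]
    (hcard : Fintype.card ι + Fintype.card κ = Module.finrank R M) :
    ∃ b : Basis (ι ⊕ κ) R M, ∀ i, b (Sum.inl i) = f (Pi.single i 1) := by
  obtain ⟨l, hl⟩ := (LinearMap.range f).mkQ.exists_rightInverse_of_surjective
    (Submodule.range_mkQ _)
  obtain ⟨e, hfe, -⟩ := (LinearMap.exact_map_mkQ_range f).splitSurjectiveEquiv hf ⟨l, hl⟩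
  have hQ : Module.finrank R (M ⧸ LinearMap.range f) = Fintype.card κ := by
    have := e.finrank_eq
    rw [Module.finrank_prod, Module.finrank_pi] at this
    omega
  let bQ : Basis κ R (M ⧸ LinearMap.range f) :=
    (Module.finBasisOfFinrankEq R _ hQ).reindex (Fintype.equivFin κ).symm
  refine ⟨((Pi.basisFun R ι).prod bQ).map e.symm, fun i => ?_⟩
  simp [LinearMap.congr_fun hfe (Pi.single i 1), Basis.prod_apply]

namespace Matrix

section IntCast

variable {S α β : Type*}

theorem map_intCast_mul [NonAssocRing S] [Fintype β] {γ : Type*} (M : Matrix α β ℤ)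
    (N : Matrix β γ ℤ) : (M * N).map (Int.cast : ℤ → S) =
      M.map (Int.cast : ℤ → S) * N.map (Int.cast : ℤ → S) :=
  Matrix.map_mul (f := Int.castRingHom S)

theorem map_intCast_mulVec [NonAssocRing S] [Fintype β] (M : Matrix α β ℤ) (v : β → ℤ) :
    M.map (Int.cast : ℤ → S) *ᵥ (fun j => (v j : S)) = fun i => ((M *ᵥ v) i : S) := by
  ext i
  simp [mulVec, dotProduct]

theorem det_map_intCast [CommRing S] [Fintype α] [DecidableEq α] (M : Matrix α α ℤ) :
    (M.map (Int.cast : ℤ → S)).det = (M.det : S) := by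
  simpa using ((Int.castRingHom S).map_det M).symm

theorem det_transpose_map_intCast_mul_self [CommRing S] [Fintype α] [Fintype β]
    [DecidableEq β] (M : Matrix α β ℤ) :
    ((M.map (Int.cast : ℤ → S))ᵀ * M.map (Int.cast : ℤ → S)).det = ((Mᵀ * M).det : S) := by
  rw [← transpose_map, ← map_intCast_mul, det_map_intCast]

theorem injective_mulVec_of_injective_map_intCast [Ring S] [CharZero S] [Fintype β]
    {M : Matrix α β ℤ} (h : Function.Injective (M.map (Int.cast : ℤ → S)).mulVec) :
    Function.Injective M.mulVec := by
  intro v w hvw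
  have := @h (fun j => (v j : S)) (fun j => (w j : S)) (by
    rw [map_intCast_mulVec, map_intCast_mulVec, hvw])
  exact funext fun j => Int.cast_injective (congrFun this j)

end IntCast

section Blocks

variable {R : Type*} [CommRing R] {η ι κ : Type*} [Fintype η] [DecidableEq ι] [DecidableEq κ]
  {B : Matrix η ι R} {D : Matrix η κ R} {Y : Matrix ι η R} {Z : Matrix κ η R}

theorem fromRows_mul_fromCols_eq_one_iff :
    fromRows Y Z * fromCols B D = 1 ↔ Y * B = 1 ∧ Y * D = 0 ∧ Z * B = 0 ∧ Z * D = 1 := by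
  rw [fromRows_mul_fromCols, ← fromBlocks_one, fromBlocks_inj]

variable [Fintype ι] [Fintype κ] [DecidableEq η]

theorem transpose_mulVec_eq_zero_iff (e : η ≃ ι ⊕ κ) (h : fromRows Y Z * fromCols B D = 1)
    (x : η → R) : Bᵀ *ᵥ x = 0 ↔ x ∈ Set.range Zᵀ.mulVec := by
  obtain ⟨-, -, hZB, -⟩ := fromRows_mul_fromCols_eq_one_iff.mp h
  have hsplit : B * Y + D * Z = 1 := by
    rw [← fromCols_mul_fromRows, (fromCols_mul_fromRows_eq_one_comm e B D Y Z).mpr h]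
  constructor
  · intro hx
    refine ⟨Dᵀ *ᵥ x, ?_⟩
    have := congrArg (· *ᵥ x) (congrArg transpose hsplit)
    simpa [transpose_add, add_mulVec, ← mulVec_mulVec, hx] using this
  · rintro ⟨w, rfl⟩
    rw [mulVec_mulVec, ← transpose_mul, hZB, transpose_zero, zero_mulVec]

/-- Jacobi's complementary minor identity for Gram determinants. -/
theorem exists_det_transpose_mul_self_eq (e : η ≃ ι ⊕ κ) (h : fromRows Y Z * fromCols B D = 1) :
    ∃ u : Rˣ, (Bᵀ * B).det = u ^ 2 * (Z * Zᵀ).det := by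
  obtain ⟨hYB, -, hZB, hZD⟩ := fromRows_mul_fromCols_eq_one_iff.mp h
  set U := (fromCols B D).submatrix id e
  set V := (fromRows Y Z).submatrix e id
  set M := (fromCols B Zᵀ).submatrix id e
  have hsq (K : Matrix (ι ⊕ κ) η R) (L : Matrix η (ι ⊕ κ) R) :
      (K.submatrix e id * L.submatrix id e).det = (K * L).det := by
    rw [← submatrix_mul _ _ _ _ _ Function.bijective_id, det_submatrix_equiv_self]
  have hVU : V.det * U.det = 1 := by rw [← det_mul, hsq, h, det_one]
  have hUM : U.det * M.det = (Bᵀ * B).det := by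
    rw [← det_transpose U, ← det_mul, transpose_submatrix, hsq, transpose_fromCols,
      fromRows_mul_fromCols, ← transpose_mul, hZB, ← transpose_mul, hZD, transpose_zero,
      transpose_one, det_fromBlocks_zero₁₂, det_one, mul_one]
  have hVM : V.det * M.det = (Z * Zᵀ).det := by
    rw [← det_mul, hsq, fromRows_mul_fromCols, hYB, hZB, det_fromBlocks_zero₂₁, det_one, one_mul]
  refine ⟨Units.mkOfMulEqOne _ _ (mul_comm V.det U.det ▸ hVU), ?_⟩
  rw [Units.val_mkOfMulEqOne, ← hUM, ← hVM]
  linear_combination (-(U.det * M.det)) * hVU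

end Blocks

theorem exists_fromRows_mul_fromCols_eq_one {R η ι κ : Type*} [CommRing R]
    [IsDomain R] [IsPrincipalIdealRing R] [Fintype η] [DecidableEq η] [Fintype ι] [DecidableEq ι]
    [Fintype κ] [DecidableEq κ] (B : Matrix η ι R) (hB : Function.Injective B.mulVec)
    [Module.IsTorsionFree R ((η → R) ⧸ LinearMap.range B.mulVecLin)]
    (hcard : Fintype.card ι + Fintype.card κ = Fintype.card η) :
    ∃ (D : Matrix η κ R) (Y : Matrix ι η R) (Z : Matrix κ η R),
      fromRows Y Z * fromCols B D = 1 := by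
  obtain ⟨b, hb⟩ := Module.Basis.exists_extend_of_isTorsionFree_quotient (κ := κ)
    (f := B.mulVecLin) hB (by rwa [Module.finrank_fintype_fun_eq_card])
  set U := (Pi.basisFun R η).toMatrix b
  set W := b.toMatrix (Pi.basisFun R η)
  have hU : fromCols B U.toCols₂ = U := by
    conv_rhs => rw [← U.fromCols_toCols]
    congr 1
    ext i j
    simp [U, Module.Basis.toMatrix_apply, hb]
  refine ⟨U.toCols₂, W.toRows₁, W.toRows₂, ?_⟩
  rw [fromRows_toRows, hU]
  exact b.toMatrix_mul_toMatrix_flip _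

end Matrix

section

variable {n d k : ℕ}

theorem col_mem_zspan (M : Matrix (Fin n) (Fin d) ℝ) (j : Fin d) : (fun i => M i j) ∈ zspan M :=
  ⟨Pi.single j 1, by ext i; simp [Matrix.mulVec, dotProduct, Pi.single_apply]⟩

theorem zspan_one : zspan (1 : Matrix (Fin n) (Fin n) ℝ) = intLattice n := by
  simp [zspan, intLattice]

theorem mem_zspan_map_intCast_iff {M : Matrix (Fin n) (Fin d) ℤ} {x : Fin n → ℤ} :
    (fun i => (x i : ℝ)) ∈ zspan (M.map (Int.cast : ℤ → ℝ)) ↔ x ∈ Set.range M.mulVec := by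
  simp only [zspan, Set.mem_range, Matrix.map_intCast_mulVec]
  refine exists_congr fun c => ⟨fun h => funext fun i => ?_, fun h => h ▸ rfl⟩
  exact Int.cast_injective (congrFun h i)

theorem exists_eq_mul_map_intCast_of_zspan_subset {P : Matrix (Fin n) (Fin d) ℝ}
    {Q : Matrix (Fin n) (Fin k) ℝ} (h : zspan Q ⊆ zspan P) :
    ∃ W : Matrix (Fin d) (Fin k) ℤ, Q = P * W.map (Int.cast : ℤ → ℝ) := by
  choose w hw using fun j => h (col_mem_zspan Q j)
  refine ⟨Matrix.of fun i j => w j i, ?_⟩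
  ext i j
  simpa [Matrix.mul_apply, Matrix.mulVec, dotProduct] using (congrFun (hw j) i).symm

theorem exists_eq_map_intCast_of_zspan_subset_intLattice {Q : Matrix (Fin n) (Fin k) ℝ}
    (h : zspan Q ⊆ intLattice n) :
    ∃ Q₀ : Matrix (Fin n) (Fin k) ℤ, Q = Q₀.map (Int.cast : ℤ → ℝ) := by
  rw [← zspan_one] at h
  simpa only [Matrix.one_mul] using exists_eq_mul_map_intCast_of_zspan_subset h

theorem det_transpose_mul_self_eq_of_zspan_eq {P Q : Matrix (Fin n) (Fin d) ℝ}
    (hP : Function.Injective P.mulVec) (h : zspan P = zspan Q) :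
    (Pᵀ * P).det = (Qᵀ * Q).det := by
  obtain ⟨W, rfl⟩ := exists_eq_mul_map_intCast_of_zspan_subset h.ge
  obtain ⟨W', hW'⟩ := exists_eq_mul_map_intCast_of_zspan_subset h.le
  have hWW' : W * W' = 1 := by
    have hcast : (W * W').map (Int.cast : ℤ → ℝ) = 1 := by
      refine Matrix.ext_iff_mulVec.mpr fun v => hP ?_
      rw [Matrix.map_intCast_mul, Matrix.one_mulVec, Matrix.mulVec_mulVec, ← Matrix.mul_assoc,
        ← hW']
    exact Matrix.map_injective Int.cast_injective
      (hcast.trans (Matrix.map_one _ Int.cast_zero Int.cast_one).symm)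
  have hW : (W.map (Int.cast : ℤ → ℝ)).det ^ 2 = 1 := by
    rw [Matrix.det_map_intCast]
    exact_mod_cast Int.isUnit_sq (Matrix.isUnit_det_of_right_inverse hWW')
  rw [Matrix.transpose_mul, Matrix.mul_assoc, ← Matrix.mul_assoc Pᵀ, Matrix.det_mul,
    Matrix.det_mul, Matrix.det_transpose]
  linear_combination (-(Pᵀ * P).det) * hW

theorem mem_perp_span_zspan_iff {B : Matrix (Fin n) (Fin d) ℝ} {y : Fin n → ℝ} :
    y ∈ perp (Submodule.span ℝ (zspan B)) ↔ Bᵀ *ᵥ y = 0 := by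
  constructor
  · intro hy
    ext j
    simpa [Matrix.mulVec, dotProduct] using hy _ (Submodule.subset_span (col_mem_zspan B j))
  · intro hy x hx
    have hspan : Submodule.span ℝ (zspan B) ≤ LinearMap.range B.mulVecLin :=
      Submodule.span_le.mpr fun _ ⟨c, hc⟩ => ⟨_, hc⟩
    obtain ⟨c, rfl⟩ := hspan hx
    rw [Matrix.mulVecLin_apply, dotProduct_comm, Matrix.dotProduct_mulVec,
      ← Matrix.mulVec_transpose, hy, zero_dotProduct]

theorem intLattice_inter_perp_eq_zspan {B : Matrix (Fin n) (Fin d) ℤ}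
    {C : Matrix (Fin n) (Fin k) ℤ} (h : ∀ x, Bᵀ *ᵥ x = 0 ↔ x ∈ Set.range C.mulVec) :
    intLattice n ∩ perp (Submodule.span ℝ (zspan (B.map (Int.cast : ℤ → ℝ)))) =
      zspan (C.map (Int.cast : ℤ → ℝ)) := by
  have hperp (x : Fin n → ℤ) : (fun i => (x i : ℝ)) ∈ perp (Submodule.span ℝ
      (zspan (B.map (Int.cast : ℤ → ℝ)))) ↔ x ∈ Set.range C.mulVec := by
    rw [mem_perp_span_zspan_iff, ← Matrix.transpose_map, Matrix.map_intCast_mulVec, ← h,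
      funext_iff, funext_iff]
    simp
  ext y
  constructor
  · rintro ⟨⟨x, rfl⟩, hy⟩
    exact mem_zspan_map_intCast_iff.mpr ((hperp x).mp hy)
  · rintro ⟨w, rfl⟩
    dsimp only
    rw [Matrix.map_intCast_mulVec]
    exact ⟨⟨_, rfl⟩, (hperp _).mpr ⟨w, rfl⟩⟩

theorem isTorsionFree_quotient_range_of_isPrimitiveIn {B : Matrix (Fin n) (Fin d) ℤ}
    (h : IsPrimitiveIn (zspan (B.map (Int.cast : ℤ → ℝ))) (intLattice n)) :
    Module.IsTorsionFree ℤ ((Fin n → ℤ) ⧸ LinearMap.range B.mulVecLin) := by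
  refine .of_smul_eq_zero fun r q hrq => or_iff_not_imp_left.mpr fun hr => ?_
  obtain ⟨x, rfl⟩ := Submodule.Quotient.mk_surjective _ q
  rw [← Submodule.Quotient.mk_smul, Submodule.Quotient.mk_eq_zero] at hrq
  rw [Submodule.Quotient.mk_eq_zero]
  have hrx := mem_zspan_map_intCast_iff.mpr hrq
  have hx : (fun i => (x i : ℝ)) ∈ Submodule.span ℝ (zspan (B.map (Int.cast : ℤ → ℝ))) := by
    have : (fun i => (x i : ℝ)) = (r : ℝ)⁻¹ • fun i => ((r • x) i : ℝ) := by
      ext i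
      simp [hr]
    rw [this]
    exact Submodule.smul_mem _ _ (Submodule.subset_span hrx)
  have : (fun i => (x i : ℝ)) ∈ zspan (B.map (Int.cast : ℤ → ℝ)) := by
    rw [h]
    exact ⟨⟨x, rfl⟩, hx⟩
  exact mem_zspan_map_intCast_iff.mp this

end

theorem stmt10_general (n d : ℕ)
    (Λ : Set (Fin n → ℝ))
    (hprim : IsPrimitiveIn Λ (intLattice n))
    (B : Matrix (Fin n) (Fin d) ℝ) (hB : IsLatticeBasis B Λ)
    (P : Matrix (Fin n) (Fin (n - d)) ℝ)
    (hP : IsLatticeBasis P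
      (intLattice n ∩ (perp (Submodule.span ℝ Λ) : Set (Fin n → ℝ)))) :
    Real.sqrt (Pᵀ * P).det = Real.sqrt (Bᵀ * B).det := by
  obtain ⟨hBli, rfl⟩ := hB
  have hdn : d ≤ n := by simpa using hBli.fintype_card_le_finrank
  obtain ⟨B₀, rfl⟩ :=
    exists_eq_map_intCast_of_zspan_subset_intLattice (hprim.subset.trans Set.inter_subset_left)
  have := isTorsionFree_quotient_range_of_isPrimitiveIn hprim
  let e : Fin n ≃ Fin d ⊕ Fin (n - d) := (finCongr (by omega)).trans finSumFinEquiv.symm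
  obtain ⟨D, Y, Z, h⟩ := Matrix.exists_fromRows_mul_fromCols_eq_one (κ := Fin (n - d)) B₀
    (Matrix.injective_mulVec_of_injective_map_intCast (Matrix.mulVec_injective_iff.mpr hBli))
    (by simp only [Fintype.card_fin]; omega)
  have hPZ : zspan P = zspan (Zᵀ.map (Int.cast : ℤ → ℝ)) :=
    hP.2.symm.trans (intLattice_inter_perp_eq_zspan (Matrix.transpose_mulVec_eq_zero_iff e h))
  obtain ⟨u, hu⟩ := Matrix.exists_det_transpose_mul_self_eq e h
  rw [det_transpose_mul_self_eq_of_zspan_eq (Matrix.mulVec_injective_iff.mpr hP.1) hPZ,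
    Matrix.det_transpose_map_intCast_mul_self, Matrix.det_transpose_map_intCast_mul_self,
    Matrix.transpose_transpose, hu, ← Units.val_pow_eq_pow_val, Int.units_sq, Units.val_one,
    one_mul]

/-- for a primitive `d`-lattice `Λ ⊆ ℤⁿ`,
`covol(Λ^⊥) = covol(Λ)` where `Λ^⊥ = ℤⁿ ∩ V_Λ^⊥`. -/
theorem stmt10 (n d : ℕ) (hd : 1 ≤ d) (hdn : d ≤ n - 1)
    (Λ : Set (Fin n → ℝ)) (hΛ : IsDLattice d Λ)
    (hprim : IsPrimitiveIn Λ (intLattice n))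
    (B : Matrix (Fin n) (Fin d) ℝ) (hB : IsLatticeBasis B Λ)
    (P : Matrix (Fin n) (Fin (n - d)) ℝ)
    (hP : IsLatticeBasis P
      (intLattice n ∩ (perp (Submodule.span ℝ Λ) : Set (Fin n → ℝ)))) :
    Real.sqrt (Pᵀ * P).det = Real.sqrt (Bᵀ * B).det :=
  stmt10_general n d Λ hprim B hB P hP
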